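/- Define φ : ℝ₊⁴ → ℝ₊⁴ (where ℝ₊ denotes the positive reals) by φ(a,b,c,d) = (abc/R, R²/S, S/R, bc²d/S), where R = ab + ad + cd and S = a²b + d(a+c)². Then φ maps ℝ₊⁴ into ℝ₊⁴ and φ is an involution: φ(φ(a,b,c,d)) = (a,b,c,d) for all a, b, c, d > 0. -/
import Mathlib


/-- The transformation `φ(a,b,c,d) = (abc/R, R²/S, S/R, bc²d/S)` with
`R = ab + ad + cd` and `S = a²b + d(a+c)²`. -/
noncomputable def phi (a b c d : ℝ) : ℝ × ℝ × ℝ × ℝ :=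
  (a * b * c / (a * b + a * d + c * d),
   (a * b + a * d + c * d) ^ 2 / (a ^ 2 * b + d * (a + c) ^ 2),
   (a ^ 2 * b + d * (a + c) ^ 2) / (a * b + a * d + c * d),
   b * c ^ 2 * d / (a ^ 2 * b + d * (a + c) ^ 2))

/-- `φ` maps `ℝ₊⁴` into `ℝ₊⁴` and is an involution. -/
theorem phi_involution (a b c d : ℝ) (ha : 0 < a) (hb : 0 < b) (hc : 0 < c) (hd : 0 < d) :
    (0 < (phi a b c d).1 ∧ 0 < (phi a b c d).2.1 ∧
      0 < (phi a b c d).2.2.1 ∧ 0 < (phi a b c d).2.2.2) ∧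
    phi (phi a b c d).1 (phi a b c d).2.1 (phi a b c d).2.2.1 (phi a b c d).2.2.2
      = (a, b, c, d) := by
  have hR : 0 < a * b + a * d + c * d := by positivity
  have hS : 0 < a ^ 2 * b + d * (a + c) ^ 2 := by positivity
  simp only [phi]
  set a' := a * b * c / (a * b + a * d + c * d) with ha'
  set b' := (a * b + a * d + c * d) ^ 2 / (a ^ 2 * b + d * (a + c) ^ 2) with hb'
  set c' := (a ^ 2 * b + d * (a + c) ^ 2) / (a * b + a * d + c * d) with hc'
  set d' := b * c ^ 2 * d / (a ^ 2 * b + d * (a + c) ^ 2) with hd'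
  have hR' : a' * b' + a' * d' + c' * d' = b * c := by
    rw [ha', hb', hc', hd']
    field_simp [hR.ne', hS.ne']
    ring
  have hS' : a' ^ 2 * b' + d' * (a' + c') ^ 2 = b * c ^ 2 := by
    rw [ha', hb', hc', hd']
    field_simp [hR.ne', hS.ne']
    ring
  refine ⟨⟨by rw [ha']; positivity, by rw [hb']; positivity,
    by rw [hc']; positivity, by rw [hd']; positivity⟩, ?_⟩
  rw [hR', hS', Prod.mk.injEq, Prod.mk.injEq, Prod.mk.injEq]
  have e1 : a' * b' * c' = a * b * c := by
    rw [ha', hb', hc', div_mul_div_comm, div_mul_div_comm,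
      div_eq_iff (by positivity)]
    ring
  have e4 : b' * c' ^ 2 * d' = b * c ^ 2 * d := by
    rw [hb', hc', hd', div_pow, div_mul_div_comm, div_mul_div_comm,
      div_eq_iff (by positivity)]
    ring
  refine ⟨?_, ?_, ?_, ?_⟩
  · rw [e1, div_eq_iff (by positivity : (b : ℝ) * c ≠ 0)]
    ring
  · rw [div_eq_iff (by positivity : (b : ℝ) * c ^ 2 ≠ 0)]
    ring
  · rw [div_eq_iff (by positivity : (b : ℝ) * c ≠ 0)]
    ring
  · rw [e4, div_eq_iff (by positivity : (b : ℝ) * c ^ 2 ≠ 0)]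
    ring
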